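/- arXiv:2307.14160 — 2 statements merged into one kernel-verified Lean document; each statement's English description precedes it below -/
import Mathlib

section
/- (Theorem 1, minimizer form.) Let S be a real symmetric matrix indexed by ι = Fin q ⊕ Fin q, let λ₁ ≥ 0 and λ₂ ≥ λ₂^sym. If Θ̂ is a positive definite symmetric matrix that minimizes the pdglasso objective L over all positive definite symmetric matrices (i.e. L(Θ̂) ≤ L(Θ) for every positive definite symmetric Θ), then Θ̄ := (Θ̂ + JΘ̂J)/2 is positive definite, fully symmetric (JΘ̄J = Θ̄, equivalently Θ̄_LL = Θ̄_RR and Θ̄_LR = Θ̄_RL), and is also a minimizer of L over all positive definite symmetric matrices. -/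
/-!
Conjugation by `J` is the reindexing `Θ ↦ Θ.submatrix Sum.swap Sum.swap`; it preserves positive
definiteness, the determinant and the entrywise ℓ1 norm. Hence `Θ̄` is the midpoint of two
positive definite matrices with the same determinant, and concavity of `log det` gives
`det Θ̂ ≤ det Θ̄` (AM-GM on the eigenvalues of `Θ̂^{-1/2} (JΘ̂J) Θ̂^{-1/2}`); convexity handles the
`λ₁` term. `Θ̄` pays no fusion penalty, while the trace term grows by at most `λ₂` times the
fusion penalty of `Θ̂`, because `tr(S JΘJ) - tr(S Θ)` pairs the blocks of `Θ_LL - Θ_RR` and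
`Θ_LR - Θ_RL` with entries of `S_RR - S_LL` and `S_LR - S_RL`, which are bounded by `2 λ₂^sym`.
Therefore `L(Θ̄) ≤ L(Θ̂)`.
-/

open Matrix Sum

/-- The swap permutation matrix `J = fromBlocks 0 I I 0` on `Fin q ⊕ Fin q`. -/
noncomputable def Jswap (q : ℕ) : Matrix (Fin q ⊕ Fin q) (Fin q ⊕ Fin q) ℝ :=
  Matrix.fromBlocks 0 1 1 0

/-- Entrywise ℓ1 norm of a real matrix. -/
noncomputable def l1norm {m n : Type*} [Fintype m] [Fintype n] (A : Matrix m n ℝ) : ℝ :=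
  ∑ i, ∑ j, |A i j|

/-- The pdglasso objective
`L(Θ) = -log det Θ + tr(SΘ) + λ₁‖Θ‖₁ + λ₂(‖Θ_LL - Θ_RR‖₁ + ‖Θ_LR - Θ_RL‖₁)`. -/
noncomputable def pdObjective {q : ℕ} (S : Matrix (Fin q ⊕ Fin q) (Fin q ⊕ Fin q) ℝ)
    (l1 l2 : ℝ) (Θ : Matrix (Fin q ⊕ Fin q) (Fin q ⊕ Fin q) ℝ) : ℝ :=
  -Real.log Θ.det + (S * Θ).trace + l1 * l1norm Θ
    + l2 * (l1norm (Θ.toBlocks₁₁ - Θ.toBlocks₂₂) + l1norm (Θ.toBlocks₁₂ - Θ.toBlocks₂₁))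

namespace Matrix

variable {n : Type*} [Fintype n] [DecidableEq n]

lemma IsHermitian.det_cfc {A : Matrix n n ℝ} (hA : A.IsHermitian) (f : ℝ → ℝ) :
    (cfc f A).det = ∏ i, f (hA.eigenvalues i) := by
  rw [hA.cfc_eq]
  simp [IsHermitian.cfc, -Unitary.conjStarAlgAut_apply]

lemma PosSemidef.four_pow_card_mul_det_le_det_one_add_sq {C : Matrix n n ℝ} (hC : C.PosSemidef) :
    4 ^ Fintype.card n * C.det ≤ (1 + C).det ^ 2 := by
  have h1C : 1 + C = cfc (fun x : ℝ => 1 + x) C := by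
    have hCsa : IsSelfAdjoint C := hC.1
    rw [cfc_const_add (1 : ℝ) (fun x => x) C, cfc_id' ℝ C, map_one]
  rw [h1C, hC.1.det_cfc, hC.1.det_eq_prod_eigenvalues, ← Finset.prod_pow,
    ← Finset.card_univ, ← Finset.prod_const, ← Finset.prod_mul_distrib]
  refine Finset.prod_le_prod (fun i _ => mul_nonneg (by norm_num) (hC.eigenvalues_nonneg i))
    fun i _ => ?_
  simp only [RCLike.ofReal_real_eq_id, id]
  nlinarith [sq_nonneg (1 - hC.1.eigenvalues i)]

open scoped MatrixOrder in
lemma PosDef.four_pow_card_mul_det_mul_det_le_det_add_sq {A B : Matrix n n ℝ}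
    (hA : A.PosDef) (hB : B.PosDef) :
    4 ^ Fintype.card n * (A.det * B.det) ≤ (A + B).det ^ 2 := by
  set M := CFC.sqrt A
  have hMH : M.IsHermitian := (CFC.sqrt_nonneg A).posSemidef.1
  have hMM : M * M = A := CFC.sqrt_mul_sqrt_self A hA.posSemidef.nonneg
  have hdetA : M.det * M.det = A.det := by rw [← det_mul, hMM]
  have hMu : IsUnit M.det := by
    rw [isUnit_iff_ne_zero]
    exact fun h => hA.det_pos.ne' (by rw [← hdetA, h, zero_mul])
  set C := M⁻¹ * B * M⁻¹
  have hC : C.PosSemidef := by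
    have := hB.posSemidef.mul_mul_conjTranspose_same M⁻¹
    rwa [hMH.inv.eq] at this
  have hMCM : M * C * M = B := by
    rw [show M * C * M = M * M⁻¹ * B * (M⁻¹ * M) by simp only [C, mul_assoc],
      mul_nonsing_inv M hMu, nonsing_inv_mul M hMu, one_mul, mul_one]
  clear_value C
  have hdetB : A.det * C.det = B.det := by
    rw [← hMCM, det_mul, det_mul, ← hdetA]; ring
  have hAB : A + B = M * (1 + C) * M := by rw [mul_add, mul_one, add_mul, hMM, hMCM]
  calc 4 ^ Fintype.card n * (A.det * B.det)
      = A.det ^ 2 * (4 ^ Fintype.card n * C.det) := by rw [← hdetB]; ring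
    _ ≤ A.det ^ 2 * (1 + C).det ^ 2 := by gcongr; exact hC.four_pow_card_mul_det_le_det_one_add_sq
    _ = (A + B).det ^ 2 := by rw [hAB, det_mul, det_mul, ← hdetA]; ring

lemma PosDef.det_le_det_midpoint {A B : Matrix n n ℝ} (hA : A.PosDef) (hB : B.PosDef)
    (hdet : B.det = A.det) : A.det ≤ ((1 / 2 : ℝ) • (A + B)).det := by
  have hmid : ((1 / 2 : ℝ) • (A + B)).PosDef := (hA.add hB).smul (by norm_num)
  have hsq := hA.four_pow_card_mul_det_mul_det_le_det_add_sq hB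
  rw [hdet] at hsq
  rw [← pow_le_pow_iff_left₀ hA.det_pos.le hmid.det_pos.le two_ne_zero, det_smul]
  calc A.det ^ 2 = (1 / 4 : ℝ) ^ Fintype.card n * (4 ^ Fintype.card n * (A.det * A.det)) := by
        rw [← mul_assoc, ← mul_pow]; norm_num; ring
    _ ≤ (1 / 4 : ℝ) ^ Fintype.card n * (A + B).det ^ 2 := by gcongr
    _ = ((1 / 2 : ℝ) ^ Fintype.card n * (A + B).det) ^ 2 := by
        rw [mul_pow, ← pow_mul, mul_comm _ 2, pow_mul]; norm_num

end Matrix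

section L1Norm
variable {m n : Type*} [Fintype m] [Fintype n]

lemma l1norm_add_le (A B : Matrix m n ℝ) : l1norm (A + B) ≤ l1norm A + l1norm B := by
  simp only [l1norm, ← Finset.sum_add_distrib]
  gcongr with i _ j _
  exact abs_add_le _ _

lemma l1norm_smul (c : ℝ) (A : Matrix m n ℝ) : l1norm (c • A) = |c| * l1norm A := by
  simp [l1norm, abs_mul, Finset.mul_sum]

lemma l1norm_zero : l1norm (0 : Matrix m n ℝ) = 0 := by
  simp [l1norm]

lemma l1norm_submatrix_equiv {m' n' : Type*} [Fintype m'] [Fintype n'] (A : Matrix m n ℝ)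
    (e : m' ≃ m) (f : n' ≃ n) : l1norm (A.submatrix e f) = l1norm A := by
  simp only [l1norm, submatrix_apply, fun i => f.sum_comp (fun j => |A i j|)]
  exact e.sum_comp (fun i => ∑ j, |A i j|)

lemma trace_mul_le_mul_l1norm {X : Matrix m n ℝ} {Y : Matrix n m ℝ} {c : ℝ}
    (hX : ∀ i j, |X i j| ≤ c) : (X * Y).trace ≤ c * l1norm Y := by
  calc (X * Y).trace = ∑ i, ∑ j, X i j * Y j i := by simp [trace, mul_apply]
    _ ≤ ∑ i, ∑ j, c * |Y j i| := by
        refine Finset.sum_le_sum fun i _ => Finset.sum_le_sum fun j _ => ?_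
        exact (le_abs_self _).trans ((abs_mul _ _).trans_le
          (mul_le_mul_of_nonneg_right (hX i j) (abs_nonneg _)))
    _ = c * l1norm Y := by rw [l1norm, Finset.sum_comm, Finset.mul_sum]; simp [Finset.mul_sum]

end L1Norm

section SwapConjugation
variable {ι R : Type*} [Fintype ι] [CommRing R]

lemma Jswap_mul_mul_Jswap {q : ℕ} (A : Matrix (Fin q ⊕ Fin q) (Fin q ⊕ Fin q) ℝ) :
    Jswap q * A * Jswap q = A.submatrix Sum.swap Sum.swap := by
  rw [← fromBlocks_toBlocks A]
  simp [Jswap, fromBlocks_multiply]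

lemma trace_fromBlocks (A B C D : Matrix ι ι R) :
    (fromBlocks A B C D).trace = A.trace + D.trace := by
  simp [trace, Fintype.sum_sum_type]

lemma trace_mul_submatrix_swap (S A : Matrix (ι ⊕ ι) (ι ⊕ ι) R) :
    (S * A.submatrix Sum.swap Sum.swap).trace = (S * A).trace
      + ((S.toBlocks₂₂ - S.toBlocks₁₁) * (A.toBlocks₁₁ - A.toBlocks₂₂)).trace
      + ((S.toBlocks₁₂ - S.toBlocks₂₁) * (A.toBlocks₁₂ - A.toBlocks₂₁)).trace := by
  conv_lhs => rw [← fromBlocks_toBlocks S, ← fromBlocks_toBlocks A]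
  conv_rhs => rw [← fromBlocks_toBlocks S, ← fromBlocks_toBlocks A]
  simp only [fromBlocks_submatrix_sum_swap_sum_swap, fromBlocks_multiply, trace_fromBlocks,
    toBlocks_fromBlocks₁₁, toBlocks_fromBlocks₁₂, toBlocks_fromBlocks₂₁, toBlocks_fromBlocks₂₂,
    Matrix.mul_sub, Matrix.sub_mul, trace_add, trace_sub]
  ring

end SwapConjugation

section SwapMidpoint
variable {ι : Type*}

noncomputable def swapMidpoint (Θ : Matrix (ι ⊕ ι) (ι ⊕ ι) ℝ) : Matrix (ι ⊕ ι) (ι ⊕ ι) ℝ :=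
  (1 / 2 : ℝ) • (Θ + Θ.submatrix Sum.swap Sum.swap)

lemma swapMidpoint_submatrix_swap (Θ : Matrix (ι ⊕ ι) (ι ⊕ ι) ℝ) :
    (swapMidpoint Θ).submatrix Sum.swap Sum.swap = swapMidpoint Θ := by
  ext i j
  simp only [swapMidpoint, submatrix_apply, Matrix.smul_apply, Matrix.add_apply, Sum.swap_swap,
    add_comm]

lemma toBlocks_eq_of_submatrix_swap_eq {α : Type*} {A : Matrix (ι ⊕ ι) (ι ⊕ ι) α}
    (hA : A.submatrix Sum.swap Sum.swap = A) :
    A.toBlocks₁₁ = A.toBlocks₂₂ ∧ A.toBlocks₁₂ = A.toBlocks₂₁ :=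
  ⟨congrArg toBlocks₁₁ hA.symm, congrArg toBlocks₁₂ hA.symm⟩

lemma posDef_swapMidpoint [Fintype ι] {Θ : Matrix (ι ⊕ ι) (ι ⊕ ι) ℝ} (hΘ : Θ.PosDef) :
    (swapMidpoint Θ).PosDef :=
  (hΘ.add (hΘ.submatrix (Equiv.sumComm ι ι).injective)).smul (by norm_num)

lemma Matrix.PosDef.det_le_det_swapMidpoint [Fintype ι] [DecidableEq ι]
    {Θ : Matrix (ι ⊕ ι) (ι ⊕ ι) ℝ} (hΘ : Θ.PosDef) : Θ.det ≤ (swapMidpoint Θ).det :=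
  hΘ.det_le_det_midpoint (hΘ.submatrix (Equiv.sumComm ι ι).injective)
    (det_submatrix_equiv_self (Equiv.sumComm ι ι) Θ)

lemma l1norm_swapMidpoint_le [Fintype ι] (Θ : Matrix (ι ⊕ ι) (ι ⊕ ι) ℝ) :
    l1norm (swapMidpoint Θ) ≤ l1norm Θ := by
  have hswap : l1norm (Θ.submatrix Sum.swap Sum.swap) = l1norm Θ :=
    l1norm_submatrix_equiv Θ (Equiv.sumComm ι ι) (Equiv.sumComm ι ι)
  have := l1norm_add_le Θ (Θ.submatrix Sum.swap Sum.swap)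
  rw [swapMidpoint, l1norm_smul, abs_of_pos (by norm_num : (0 : ℝ) < 1 / 2)]
  linarith

lemma trace_mul_swapMidpoint_le [Fintype ι] (S Θ : Matrix (ι ⊕ ι) (ι ⊕ ι) ℝ) {l2 : ℝ}
    (hl2 : ∀ i j : ι,
      max (|S (inl i) (inl j) - S (inr i) (inr j)| / 2)
          (|S (inr i) (inl j) - S (inl i) (inr j)| / 2) ≤ l2) :
    (S * swapMidpoint Θ).trace ≤ (S * Θ).trace
      + l2 * (l1norm (Θ.toBlocks₁₁ - Θ.toBlocks₂₂) + l1norm (Θ.toBlocks₁₂ - Θ.toBlocks₂₁)) := by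
  have hdiag : ∀ i j, |(S.toBlocks₂₂ - S.toBlocks₁₁) i j| ≤ 2 * l2 := fun i j => by
    have := (le_max_left _ _).trans (hl2 i j)
    change |S (inr i) (inr j) - S (inl i) (inl j)| ≤ 2 * l2
    rw [abs_sub_comm]
    linarith
  have hoff : ∀ i j, |(S.toBlocks₁₂ - S.toBlocks₂₁) i j| ≤ 2 * l2 := fun i j => by
    have := (le_max_right _ _).trans (hl2 i j)
    change |S (inl i) (inr j) - S (inr i) (inl j)| ≤ 2 * l2
    rw [abs_sub_comm]
    linarith
  have hdiag' := trace_mul_le_mul_l1norm (Y := Θ.toBlocks₁₁ - Θ.toBlocks₂₂) hdiag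
  have hoff' := trace_mul_le_mul_l1norm (Y := Θ.toBlocks₁₂ - Θ.toBlocks₂₁) hoff
  rw [swapMidpoint, mul_smul_comm, trace_smul, mul_add, trace_add, trace_mul_submatrix_swap,
    smul_eq_mul]
  linarith

end SwapMidpoint

lemma pdObjective_swapMidpoint_le {q : ℕ} {S : Matrix (Fin q ⊕ Fin q) (Fin q ⊕ Fin q) ℝ}
    {l1 l2 : ℝ} (hl1 : 0 ≤ l1)
    (hl2 : ∀ i j : Fin q,
      max (|S (inl i) (inl j) - S (inr i) (inr j)| / 2)
          (|S (inr i) (inl j) - S (inl i) (inr j)| / 2) ≤ l2)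
    {Θ : Matrix (Fin q ⊕ Fin q) (Fin q ⊕ Fin q) ℝ} (hΘ : Θ.PosDef) :
    pdObjective S l1 l2 (swapMidpoint Θ) ≤ pdObjective S l1 l2 Θ := by
  obtain ⟨h₁₁, h₁₂⟩ := toBlocks_eq_of_submatrix_swap_eq (swapMidpoint_submatrix_swap Θ)
  have hlog := Real.log_le_log hΘ.det_pos hΘ.det_le_det_swapMidpoint
  have htrace := trace_mul_swapMidpoint_le S Θ hl2
  have hl1norm := mul_le_mul_of_nonneg_left (l1norm_swapMidpoint_le Θ) hl1
  rw [pdObjective, pdObjective, h₁₁, h₁₂, sub_self, sub_self, l1norm_zero, add_zero, mul_zero,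
    add_zero]
  linarith

theorem pdglasso_fully_symmetric_minimizer_general (q : ℕ)
    (S : Matrix (Fin q ⊕ Fin q) (Fin q ⊕ Fin q) ℝ)
    (l1 l2 : ℝ) (hl1 : 0 ≤ l1)
    (hl2 : ∀ i j : Fin q,
      max (|S (inl i) (inl j) - S (inr i) (inr j)| / 2)
          (|S (inr i) (inl j) - S (inl i) (inr j)| / 2) ≤ l2)
    (Θhat : Matrix (Fin q ⊕ Fin q) (Fin q ⊕ Fin q) ℝ) (hΘ : Θhat.PosDef)
    (hmin : ∀ Θ : Matrix (Fin q ⊕ Fin q) (Fin q ⊕ Fin q) ℝ, Θ.PosDef → Θ.IsSymm →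
      pdObjective S l1 l2 Θhat ≤ pdObjective S l1 l2 Θ) :
    ((1 / 2 : ℝ) • (Θhat + Jswap q * Θhat * Jswap q)).PosDef ∧
      Jswap q * ((1 / 2 : ℝ) • (Θhat + Jswap q * Θhat * Jswap q)) * Jswap q
        = (1 / 2 : ℝ) • (Θhat + Jswap q * Θhat * Jswap q) ∧
      ((1 / 2 : ℝ) • (Θhat + Jswap q * Θhat * Jswap q)).toBlocks₁₁
        = ((1 / 2 : ℝ) • (Θhat + Jswap q * Θhat * Jswap q)).toBlocks₂₂ ∧
      ((1 / 2 : ℝ) • (Θhat + Jswap q * Θhat * Jswap q)).toBlocks₁₂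
        = ((1 / 2 : ℝ) • (Θhat + Jswap q * Θhat * Jswap q)).toBlocks₂₁ ∧
      ∀ Θ : Matrix (Fin q ⊕ Fin q) (Fin q ⊕ Fin q) ℝ, Θ.PosDef → Θ.IsSymm →
        pdObjective S l1 l2 ((1 / 2 : ℝ) • (Θhat + Jswap q * Θhat * Jswap q))
          ≤ pdObjective S l1 l2 Θ := by
  have hbar : (1 / 2 : ℝ) • (Θhat + Jswap q * Θhat * Jswap q) = swapMidpoint Θhat := by
    rw [Jswap_mul_mul_Jswap, swapMidpoint]
  rw [hbar, Jswap_mul_mul_Jswap]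
  have hsymm := swapMidpoint_submatrix_swap Θhat
  obtain ⟨h₁₁, h₁₂⟩ := toBlocks_eq_of_submatrix_swap_eq hsymm
  exact ⟨posDef_swapMidpoint hΘ, hsymm, h₁₁, h₁₂,
    fun Θ hΘpd hΘsymm => (pdObjective_swapMidpoint_le hl1 hl2 hΘ).trans (hmin Θ hΘpd hΘsymm)⟩

/-- Theorem 1, minimizer form: if `λ₂ ≥ λ₂^sym` and `Θ̂` minimizes the
pdglasso objective over positive definite symmetric matrices, then `Θ̄ = (Θ̂ + JΘ̂J)/2`
is positive definite, fully symmetric, and also a minimizer. -/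
theorem pdglasso_fully_symmetric_minimizer (q : ℕ) (hq : 0 < q)
    (S : Matrix (Fin q ⊕ Fin q) (Fin q ⊕ Fin q) ℝ) (hS : S.IsSymm)
    (l1 l2 : ℝ) (hl1 : 0 ≤ l1)
    (hl2 : ∀ i j : Fin q,
      max (|S (inl i) (inl j) - S (inr i) (inr j)| / 2)
          (|S (inr i) (inl j) - S (inl i) (inr j)| / 2) ≤ l2)
    (Θhat : Matrix (Fin q ⊕ Fin q) (Fin q ⊕ Fin q) ℝ) (hΘ : Θhat.PosDef) (hΘs : Θhat.IsSymm)
    (hmin : ∀ Θ : Matrix (Fin q ⊕ Fin q) (Fin q ⊕ Fin q) ℝ, Θ.PosDef → Θ.IsSymm →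
      pdObjective S l1 l2 Θhat ≤ pdObjective S l1 l2 Θ) :
    ((1 / 2 : ℝ) • (Θhat + Jswap q * Θhat * Jswap q)).PosDef ∧
      Jswap q * ((1 / 2 : ℝ) • (Θhat + Jswap q * Θhat * Jswap q)) * Jswap q
        = (1 / 2 : ℝ) • (Θhat + Jswap q * Θhat * Jswap q) ∧
      ((1 / 2 : ℝ) • (Θhat + Jswap q * Θhat * Jswap q)).toBlocks₁₁
        = ((1 / 2 : ℝ) • (Θhat + Jswap q * Θhat * Jswap q)).toBlocks₂₂ ∧
      ((1 / 2 : ℝ) • (Θhat + Jswap q * Θhat * Jswap q)).toBlocks₁₂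
        = ((1 / 2 : ℝ) • (Θhat + Jswap q * Θhat * Jswap q)).toBlocks₂₁ ∧
      ∀ Θ : Matrix (Fin q ⊕ Fin q) (Fin q ⊕ Fin q) ℝ, Θ.PosDef → Θ.IsSymm →
        pdObjective S l1 l2 ((1 / 2 : ℝ) • (Θhat + Jswap q * Θhat * Jswap q))
          ≤ pdObjective S l1 l2 Θ :=
  pdglasso_fully_symmetric_minimizer_general q S l1 l2 hl1 hl2 Θhat hΘ hmin
end

section
/- Let S and Θ be real symmetric matrices indexed by ι = Fin q ⊕ Fin q, and suppose λ₁ ≥ |S (inl i) (inr j)| for all i, j ∈ Fin q. Let Θ̄ := fromBlocks Θ_LL 0 0 Θ_RR be the block-diagonal truncation of Θ. Then trace(S·Θ̄) − trace(S·Θ) + λ₁·(‖Θ̄‖₁ − ‖Θ‖₁) ≤ 0. (Key step in the proof of Proposition 2.) -/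
open Matrix Sum

/- Only the cross blocks of `Θ` differ from its truncation `Θ̄`. Writing `O := Θ - Θ̄` for them,
the left-hand side is `-tr(S O) - λ₁‖O‖₁`, and `|tr(S O)| ≤ Σ |s_{ab}| |o_{ba}| ≤ λ₁‖O‖₁`
because `o_{ba} ≠ 0` only for cross-block pairs, where `|s_{ab}| ≤ λ₁` (using `S = Sᵀ` for the
lower-left block). -/

theorem l1norm_fromBlocks {l m n o : Type*} [Fintype l] [Fintype m] [Fintype n] [Fintype o]
    (A : Matrix n l ℝ) (B : Matrix n m ℝ) (C : Matrix o l ℝ) (D : Matrix o m ℝ) :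
    l1norm (fromBlocks A B C D) = l1norm A + l1norm B + l1norm C + l1norm D := by
  simp only [l1norm, Fintype.sum_sum_type, fromBlocks_apply₁₁, fromBlocks_apply₁₂,
    fromBlocks_apply₂₁, fromBlocks_apply₂₂, Finset.sum_add_distrib]
  ring

theorem abs_trace_mul_le_mul_l1norm {m n : Type*} [Fintype m] [Fintype n]
    (S : Matrix m n ℝ) (B : Matrix n m ℝ) (l : ℝ) (hsupp : ∀ a b, B b a ≠ 0 → |S a b| ≤ l) :
    |(S * B).trace| ≤ l * l1norm B := by
  have hterm : ∀ a b, |S a b * B b a| ≤ l * |B b a| := fun a b => by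
    by_cases hB : B b a = 0
    · simp [hB]
    · rw [abs_mul]
      exact mul_le_mul_of_nonneg_right (hsupp a b hB) (abs_nonneg _)
  calc |(S * B).trace| = |∑ a, ∑ b, S a b * B b a| := by simp only [trace, diag, mul_apply]
    _ ≤ ∑ a, ∑ b, |S a b * B b a| := (Finset.abs_sum_le_sum_abs _ _).trans
      (Finset.sum_le_sum fun a _ => Finset.abs_sum_le_sum_abs _ _)
    _ ≤ ∑ a, ∑ b, l * |B b a| :=
      Finset.sum_le_sum fun a _ => Finset.sum_le_sum fun b _ => hterm a b
    _ = l * l1norm B := by simp only [l1norm, Finset.mul_sum, Finset.sum_comm (γ := m)]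

theorem fromBlocks_diag_add_fromBlocks_offDiag {m n α : Type*} [AddZeroClass α]
    (A : Matrix (m ⊕ n) (m ⊕ n) α) :
    fromBlocks A.toBlocks₁₁ 0 0 A.toBlocks₂₂ + fromBlocks 0 A.toBlocks₁₂ A.toBlocks₂₁ 0 = A := by
  rw [fromBlocks_add]
  simpa using fromBlocks_toBlocks A

theorem trace_l1_blockdiagonal_step_general (q : ℕ)
    (S Θ : Matrix (Fin q ⊕ Fin q) (Fin q ⊕ Fin q) ℝ) (hS : S.IsSymm)
    (l1 : ℝ) (hl1 : ∀ i j : Fin q, |S (inl i) (inr j)| ≤ l1) :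
    (S * Matrix.fromBlocks Θ.toBlocks₁₁ 0 0 Θ.toBlocks₂₂).trace - (S * Θ).trace
      + l1 * (l1norm (Matrix.fromBlocks Θ.toBlocks₁₁ 0 0 Θ.toBlocks₂₂) - l1norm Θ) ≤ 0 := by
  set O := fromBlocks 0 Θ.toBlocks₁₂ Θ.toBlocks₂₁ 0
  have htrace : (S * Θ).trace = (S * fromBlocks Θ.toBlocks₁₁ 0 0 Θ.toBlocks₂₂).trace
      + (S * O).trace := by
    conv_lhs => rw [← fromBlocks_diag_add_fromBlocks_offDiag Θ]
    rw [Matrix.mul_add, trace_add]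
  have hnorm : l1norm Θ = l1norm (fromBlocks Θ.toBlocks₁₁ 0 0 Θ.toBlocks₂₂) + l1norm O := by
    have hzero : l1norm (0 : Matrix (Fin q) (Fin q) ℝ) = 0 := by simp [l1norm]
    conv_lhs => rw [← fromBlocks_toBlocks Θ]
    rw [l1norm_fromBlocks, l1norm_fromBlocks, l1norm_fromBlocks, hzero]
    ring
  have hcross : ∀ a b, O b a ≠ 0 → |S a b| ≤ l1 := by
    rintro (i | i) (j | j) hO
    · exact absurd rfl hO
    · exact hl1 i j
    · rw [← hS.apply]; exact hl1 j i
    · exact absurd rfl hO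
  have hbound := abs_trace_mul_le_mul_l1norm S O l1 hcross
  rw [htrace, hnorm]
  linarith [neg_abs_le (S * O).trace]

/-- key step in the proof of Proposition 2:
`tr(S Θ̄) − tr(S Θ) + λ₁ (‖Θ̄‖₁ − ‖Θ‖₁) ≤ 0` for the block-diagonal truncation
`Θ̄ = fromBlocks Θ_LL 0 0 Θ_RR`, when `λ₁ ≥ |s_{i j'}|` for all across-block pairs. -/
theorem trace_l1_blockdiagonal_step (q : ℕ) (hq : 0 < q)
    (S Θ : Matrix (Fin q ⊕ Fin q) (Fin q ⊕ Fin q) ℝ) (hS : S.IsSymm) (hΘ : Θ.IsSymm)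
    (l1 : ℝ) (hl1 : ∀ i j : Fin q, |S (inl i) (inr j)| ≤ l1) :
    (S * Matrix.fromBlocks Θ.toBlocks₁₁ 0 0 Θ.toBlocks₂₂).trace - (S * Θ).trace
      + l1 * (l1norm (Matrix.fromBlocks Θ.toBlocks₁₁ 0 0 Θ.toBlocks₂₂) - l1norm Θ) ≤ 0 :=
  trace_l1_blockdiagonal_step_general q S Θ hS l1 hl1
end
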